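/- arXiv:1405.3206 — 3 statements merged into one kernel-verified Lean document; each statement's English description precedes it below -/
import Mathlib

section
/- For every x̄, p̄ ∈ ℝ^n, if (λ₁, w₁) and (λ₂, w₂) are both classical solutions of the critical cell problem at (x̄, p̄), then λ₁ = λ₂. -/
open Matrix MeasureTheory Set

noncomputable section

/-- Euclidean norm of a vector in `ℝ^k`. -/
def en {k : ℕ} (v : Fin k → ℝ) : ℝ := Real.sqrt (v ⬝ᵥ v)

/-- Squared Euclidean norm. -/
def sq2 {k : ℕ} (v : Fin k → ℝ) : ℝ := v ⬝ᵥ v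

/-- Partial derivative in the `i`-th coordinate direction. -/
def pd {m : ℕ} (w : (Fin m → ℝ) → ℝ) (i : Fin m) (y : Fin m → ℝ) : ℝ :=
  fderiv ℝ w y (Pi.single i 1)

/-- Gradient. -/
def vgrad {m : ℕ} (w : (Fin m → ℝ) → ℝ) (y : Fin m → ℝ) : Fin m → ℝ := fun i => pd w i y

/-- Hessian matrix. -/
def vhess {m : ℕ} (w : (Fin m → ℝ) → ℝ) (y : Fin m → ℝ) : Matrix (Fin m) (Fin m) ℝ :=
  Matrix.of fun i j => pd (pd w j) i y

/-- `ℤ^m`-periodicity. -/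
def ZPer {m : ℕ} (w : (Fin m → ℝ) → ℝ) : Prop :=
  ∀ (y : Fin m → ℝ) (k : Fin m → ℤ), w (y + fun i => (k i : ℝ)) = w y

/-- Standing hypotheses on the data. -/
structure StandingHyp {n m r : ℕ}
    (σ : (Fin n → ℝ) → (Fin m → ℝ) → Matrix (Fin n) (Fin r) ℝ)
    (b : (Fin m → ℝ) → Fin m → ℝ)
    (τ : (Fin m → ℝ) → Matrix (Fin m) (Fin r) ℝ) : Prop where
  σ_bdd : ∃ C : ℝ, ∀ x y i j, |σ x y i j| ≤ C
  σ_lip : ∃ L : ℝ, ∀ x x' y y' i j, |σ x y i j - σ x' y' i j| ≤ L * (en (x - x') + en (y - y'))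
  σ_per : ∀ x y (k : Fin m → ℤ), σ x (y + fun l => (k l : ℝ)) = σ x y
  b_lip : ∃ L : ℝ, ∀ y y' i, |b y i - b y' i| ≤ L * en (y - y')
  b_per : ∀ y (k : Fin m → ℤ), b (y + fun l => (k l : ℝ)) = b y
  τ_lip : ∃ L : ℝ, ∀ y y' i j, |τ y i j - τ y' i j| ≤ L * en (y - y')
  τ_per : ∀ y (k : Fin m → ℤ), τ (y + fun l => (k l : ℝ)) = τ y
  τ_nondeg : ∃ θ : ℝ, 0 < θ ∧ ∀ y ξ, θ * sq2 ξ ≤ sq2 ((τ y)ᵀ *ᵥ ξ)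

/-- Classical solution of the critical cell problem at `(x, p)`. -/
def IsCriticalSol {n m r : ℕ}
    (σ : (Fin n → ℝ) → (Fin m → ℝ) → Matrix (Fin n) (Fin r) ℝ)
    (b : (Fin m → ℝ) → Fin m → ℝ)
    (τ : (Fin m → ℝ) → Matrix (Fin m) (Fin r) ℝ)
    (x p : Fin n → ℝ) (lam : ℝ) (w : (Fin m → ℝ) → ℝ) : Prop :=
  ContDiff ℝ 2 w ∧ ZPer w ∧
    ∀ y, lam = sq2 ((σ x y)ᵀ *ᵥ p)
        + 2 * ((τ y *ᵥ ((σ x y)ᵀ *ᵥ p)) ⬝ᵥ vgrad w y)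
        + b y ⬝ᵥ vgrad w y
        + sq2 ((τ y)ᵀ *ᵥ vgrad w y)
        + Matrix.trace (τ y * (τ y)ᵀ * vhess w y)

/-- Classical solution of the supercritical cell problem at `(x, p)`. -/
def IsSupercriticalSol {n m r : ℕ}
    (σ : (Fin n → ℝ) → (Fin m → ℝ) → Matrix (Fin n) (Fin r) ℝ)
    (b : (Fin m → ℝ) → Fin m → ℝ)
    (τ : (Fin m → ℝ) → Matrix (Fin m) (Fin r) ℝ)
    (x p : Fin n → ℝ) (lam : ℝ) (w : (Fin m → ℝ) → ℝ) : Prop :=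
  ContDiff ℝ 2 w ∧ ZPer w ∧
    ∀ y, lam = sq2 ((σ x y)ᵀ *ᵥ p) + b y ⬝ᵥ vgrad w y
        + Matrix.trace (τ y * (τ y)ᵀ * vhess w y)

/-- Classical solution of the subcritical cell problem at `(x, p)`. -/
def IsSubcriticalSol {n m r : ℕ}
    (σ : (Fin n → ℝ) → (Fin m → ℝ) → Matrix (Fin n) (Fin r) ℝ)
    (τ : (Fin m → ℝ) → Matrix (Fin m) (Fin r) ℝ)
    (x p : Fin n → ℝ) (lam : ℝ) (w : (Fin m → ℝ) → ℝ) : Prop :=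
  ContDiff ℝ 1 w ∧ ZPer w ∧
    ∀ y, lam = sq2 ((τ y)ᵀ *ᵥ vgrad w y + (σ x y)ᵀ *ᵥ p)

/-! The difference `v = w₁ - w₂` is `ℤ^m`-periodic and continuous, so it attains a global maximum
at some `y₀`. There `Dw₁ = Dw₂`, so subtracting the two cell equations at `y₀` leaves
`λ₁ - λ₂ = tr (τ τᵀ D²v(y₀))`, which is `≤ 0` because `D²v(y₀)` is negative semidefinite.
Exchanging the roles of the two solutions gives `λ₁ = λ₂`. -/

open Filter Topology

/- If the second derivative were positive, the second derivative test would make `t` also a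
local minimum, so `g` would be locally constant and its second derivative would vanish. -/
theorem IsLocalMax.deriv_deriv_nonpos {g : ℝ → ℝ} {t : ℝ} (h : IsLocalMax g t)
    (hc : ContinuousAt g t) : deriv (deriv g) t ≤ 0 := by
  by_contra! hpos
  have hconst : g =ᶠ[𝓝 t] fun _ => g t := by
    filter_upwards [h, isLocalMin_of_deriv_deriv_pos hpos h.deriv_eq_zero hc] with s hs hs'
      using le_antisymm hs hs'
  simp [hconst.deriv.deriv_eq] at hpos

theorem IsLocalMax.fderiv_fderiv_apply_self_nonpos {E : Type*} [NormedAddCommGroup E]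
    [NormedSpace ℝ E] {v : E → ℝ} {y₀ : E} (h : IsLocalMax v y₀) (hv : Differentiable ℝ v)
    (hv' : DifferentiableAt ℝ (fderiv ℝ v) y₀) (ξ : E) :
    fderiv ℝ (fderiv ℝ v) y₀ ξ ξ ≤ 0 := by
  have hline : ∀ t : ℝ, HasDerivAt (fun s : ℝ => y₀ + s • ξ) ξ t := fun t => by
    simpa using ((hasDerivAt_id t).smul_const ξ).const_add y₀
  have hderiv : deriv (fun s : ℝ => v (y₀ + s • ξ)) = fun s => fderiv ℝ v (y₀ + s • ξ) ξ :=
    funext fun t => ((hv _).hasFDerivAt.comp_hasDerivAt t (hline t)).deriv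
  have hderiv2 : HasDerivAt (fun s : ℝ => fderiv ℝ v (y₀ + s • ξ) ξ)
      (fderiv ℝ (fderiv ℝ v) y₀ ξ ξ) 0 := by
    simpa using (hv'.hasFDerivAt.comp_hasDerivAt_of_eq 0 (hline 0) (by simp)).clm_apply
      (hasDerivAt_const 0 ξ)
  have hmax : IsLocalMax (fun s : ℝ => v (y₀ + s • ξ)) 0 :=
    IsLocalMax.comp_continuous (g := fun s : ℝ => y₀ + s • ξ) (by simpa using h) (by fun_prop)
  rw [← hderiv2.deriv, ← hderiv]
  exact hmax.deriv_deriv_nonpos (hv.continuous.comp (by fun_prop)).continuousAt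

theorem Matrix.trace_mul_transpose_mul_nonpos {ι κ R : Type*} [Fintype ι] [Fintype κ]
    [CommRing R] [PartialOrder R] [IsOrderedRing R] (A : Matrix ι κ R) {H : Matrix ι ι R}
    (hH : ∀ ξ, ξ ⬝ᵥ (H *ᵥ ξ) ≤ 0) : trace (A * Aᵀ * H) ≤ 0 := by
  rw [trace_mul_cycle, trace_mul_comm, trace]
  refine Finset.sum_nonpos fun j _ => ?_
  convert hH (Aᵀ j) using 1
  simp [mul_apply, dotProduct, mulVec]

theorem pd_sub {m : ℕ} {f g : (Fin m → ℝ) → ℝ} {y : Fin m → ℝ} (hf : DifferentiableAt ℝ f y)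
    (hg : DifferentiableAt ℝ g y) (i : Fin m) : pd (f - g) i y = pd f i y - pd g i y := by
  simp [pd, fderiv_sub hf hg]

theorem vgrad_sub {m : ℕ} {f g : (Fin m → ℝ) → ℝ} {y : Fin m → ℝ} (hf : DifferentiableAt ℝ f y)
    (hg : DifferentiableAt ℝ g y) : vgrad (f - g) y = vgrad f y - vgrad g y :=
  funext (pd_sub hf hg)

theorem ContDiff.differentiable_pd {m : ℕ} {f : (Fin m → ℝ) → ℝ} (hf : ContDiff ℝ 2 f)
    (j : Fin m) : Differentiable ℝ (pd f j) :=
  ((hf.fderiv_right one_add_one_eq_two.le).clm_apply contDiff_const).differentiable one_ne_zero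

theorem vhess_sub {m : ℕ} {f g : (Fin m → ℝ) → ℝ} (hf : ContDiff ℝ 2 f) (hg : ContDiff ℝ 2 g)
    (y : Fin m → ℝ) : vhess (f - g) y = vhess f y - vhess g y := by
  have hpd : ∀ j, pd (f - g) j = pd f j - pd g j := fun j => funext fun z =>
    pd_sub (hf.differentiable two_ne_zero z) (hg.differentiable two_ne_zero z) j
  ext i j
  simp [vhess, hpd, pd_sub (hf.differentiable_pd j y) (hg.differentiable_pd j y)]

theorem pd_pd_eq_fderiv_fderiv {m : ℕ} {v : (Fin m → ℝ) → ℝ} {y : Fin m → ℝ}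
    (hv : DifferentiableAt ℝ (fderiv ℝ v) y) (i j : Fin m) :
    pd (pd v j) i y = fderiv ℝ (fderiv ℝ v) y (Pi.single i 1) (Pi.single j 1) := by
  change fderiv ℝ (fun z => fderiv ℝ v z (Pi.single j 1)) y (Pi.single i 1) = _
  simp [fderiv_clm_apply hv (differentiableAt_const _)]

theorem dotProduct_vhess_mulVec {m : ℕ} {v : (Fin m → ℝ) → ℝ} {y : Fin m → ℝ}
    (hv : DifferentiableAt ℝ (fderiv ℝ v) y) (ξ : Fin m → ℝ) :
    ξ ⬝ᵥ (vhess v y *ᵥ ξ) = fderiv ℝ (fderiv ℝ v) y ξ ξ := by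
  conv_rhs => rw [pi_eq_sum_univ' ξ]
  simp only [map_sum, map_smul, _root_.sum_apply, _root_.smul_apply, smul_eq_mul, vhess, of_apply,
    pd_pd_eq_fderiv_fderiv hv, dotProduct, mulVec, Finset.mul_sum]
  rw [Finset.sum_comm]
  exact Finset.sum_congr rfl fun _ _ => Finset.sum_congr rfl fun _ _ => by ring

theorem IsLocalMax.vgrad_eq_zero {m : ℕ} {v : (Fin m → ℝ) → ℝ} {y : Fin m → ℝ}
    (h : IsLocalMax v y) : vgrad v y = 0 :=
  funext fun i => by simp [vgrad, pd, h.fderiv_eq_zero]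

theorem IsLocalMax.dotProduct_vhess_mulVec_nonpos {m : ℕ} {v : (Fin m → ℝ) → ℝ}
    {y : Fin m → ℝ} (h : IsLocalMax v y) (hv : ContDiff ℝ 2 v) (ξ : Fin m → ℝ) :
    ξ ⬝ᵥ (vhess v y *ᵥ ξ) ≤ 0 := by
  have hv' : Differentiable ℝ (fderiv ℝ v) :=
    (hv.fderiv_right one_add_one_eq_two.le).differentiable one_ne_zero
  rw [dotProduct_vhess_mulVec (hv' y)]
  exact h.fderiv_fderiv_apply_self_nonpos (hv.differentiable two_ne_zero) (hv' y) ξ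

theorem ZPer.sub {m : ℕ} {f g : (Fin m → ℝ) → ℝ} (hf : ZPer f) (hg : ZPer g) : ZPer (f - g) :=
  fun y k => by simp [hf y k, hg y k]

theorem ZPer.exists_forall_le {m : ℕ} {v : (Fin m → ℝ) → ℝ} (hv : ZPer v) (hc : Continuous v) :
    ∃ y₀, ∀ y, v y ≤ v y₀ := by
  obtain ⟨y₀, -, hy₀⟩ := (isCompact_Icc (a := (0 : Fin m → ℝ)) (b := 1)).exists_isMaxOn
    (nonempty_Icc.mpr zero_le_one) hc.continuousOn
  refine ⟨y₀, fun y => ?_⟩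
  have hfract : y = (fun i => Int.fract (y i)) + fun i => ((⌊y i⌋ : ℤ) : ℝ) :=
    funext fun i => (Int.fract_add_floor (y i)).symm
  rw [hfract, hv]
  exact hy₀ ⟨fun i => Int.fract_nonneg _, fun i => (Int.fract_lt_one _).le⟩

theorem IsCriticalSol.eigenvalue_le {n m r : ℕ}
    {σ : (Fin n → ℝ) → (Fin m → ℝ) → Matrix (Fin n) (Fin r) ℝ} {b : (Fin m → ℝ) → Fin m → ℝ}
    {τ : (Fin m → ℝ) → Matrix (Fin m) (Fin r) ℝ} {x p : Fin n → ℝ} {lam₁ lam₂ : ℝ}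
    {w₁ w₂ : (Fin m → ℝ) → ℝ} (h₁ : IsCriticalSol σ b τ x p lam₁ w₁)
    (h₂ : IsCriticalSol σ b τ x p lam₂ w₂) : lam₁ ≤ lam₂ := by
  obtain ⟨hw₁, hper₁, heq₁⟩ := h₁
  obtain ⟨hw₂, hper₂, heq₂⟩ := h₂
  obtain ⟨y₀, hmax⟩ := (hper₁.sub hper₂).exists_forall_le (hw₁.sub hw₂).continuous
  have hloc : IsLocalMax (w₁ - w₂) y₀ := Eventually.of_forall hmax
  have hgrad : vgrad w₁ y₀ = vgrad w₂ y₀ := by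
    rw [← sub_eq_zero, ← vgrad_sub (hw₁.differentiable two_ne_zero y₀)
      (hw₂.differentiable two_ne_zero y₀), hloc.vgrad_eq_zero]
  rw [← sub_nonpos]
  calc lam₁ - lam₂ = trace (τ y₀ * (τ y₀)ᵀ * vhess (w₁ - w₂) y₀) := by
        rw [heq₁ y₀, heq₂ y₀, hgrad, vhess_sub hw₁ hw₂, Matrix.mul_sub, trace_sub]; ring
    _ ≤ 0 := trace_mul_transpose_mul_nonpos _ (hloc.dotProduct_vhess_mulVec_nonpos (hw₁.sub hw₂))

theorem stmt1_general {n m r : ℕ}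
    (σ : (Fin n → ℝ) → (Fin m → ℝ) → Matrix (Fin n) (Fin r) ℝ)
    (b : (Fin m → ℝ) → Fin m → ℝ)
    (τ : (Fin m → ℝ) → Matrix (Fin m) (Fin r) ℝ)
    (xbar pbar : Fin n → ℝ)
    (lam₁ lam₂ : ℝ) (w₁ w₂ : (Fin m → ℝ) → ℝ)
    (h₁ : IsCriticalSol σ b τ xbar pbar lam₁ w₁)
    (h₂ : IsCriticalSol σ b τ xbar pbar lam₂ w₂) :
    lam₁ = lam₂ :=
  le_antisymm (h₁.eigenvalue_le h₂) (h₂.eigenvalue_le h₁)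

/-- uniqueness of the additive eigenvalue in the critical cell problem. -/
theorem stmt1 {n m r : ℕ}
    (σ : (Fin n → ℝ) → (Fin m → ℝ) → Matrix (Fin n) (Fin r) ℝ)
    (b : (Fin m → ℝ) → Fin m → ℝ)
    (τ : (Fin m → ℝ) → Matrix (Fin m) (Fin r) ℝ)
    (hyp : StandingHyp σ b τ)
    (xbar pbar : Fin n → ℝ)
    (lam₁ lam₂ : ℝ) (w₁ w₂ : (Fin m → ℝ) → ℝ)
    (h₁ : IsCriticalSol σ b τ xbar pbar lam₁ w₁)
    (h₂ : IsCriticalSol σ b τ xbar pbar lam₂ w₂) :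
    lam₁ = lam₂ :=
  stmt1_general σ b τ xbar pbar lam₁ lam₂ w₁ w₂ h₁ h₂

end
end

section
/- Assume the non-correlation condition τ(y) σ(x,y)^T = 0 for all x ∈ ℝ^n and y ∈ ℝ^m. If (λ, w) is a classical solution of the subcritical cell problem at (x̄, p̄), then λ = max_{y ∈ ℝ^m} |σ(x̄,y)^T p̄|² (the maximum is attained by periodicity and continuity). -/
open Matrix MeasureTheory Set

noncomputable section

lemma sq2_nonneg {k : ℕ} (v : Fin k → ℝ) : 0 ≤ sq2 v := by
  unfold sq2 dotProduct
  exact Finset.sum_nonneg fun i _ => mul_self_nonneg (v i)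

lemma sq2_add {k : ℕ} (a b : Fin k → ℝ) :
    sq2 (a + b) = sq2 a + 2 * (a ⬝ᵥ b) + sq2 b := by
  simp only [sq2, add_dotProduct, dotProduct_add, dotProduct_comm b a]
  ring

/-- under the non-correlation condition `τ σᵀ = 0`, the subcritical
effective Hamiltonian equals the (attained) maximum of `|σ(x̄,y)ᵀp̄|²` over `y`. -/
theorem stmt11 {n m r : ℕ}
    (σ : (Fin n → ℝ) → (Fin m → ℝ) → Matrix (Fin n) (Fin r) ℝ)
    (b : (Fin m → ℝ) → Fin m → ℝ)
    (τ : (Fin m → ℝ) → Matrix (Fin m) (Fin r) ℝ)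
    (hyp : StandingHyp σ b τ)
    (huncor : ∀ (x : Fin n → ℝ) (y : Fin m → ℝ), τ y * (σ x y)ᵀ = 0)
    (xbar pbar : Fin n → ℝ) (lam : ℝ) (w : (Fin m → ℝ) → ℝ)
    (h : IsSubcriticalSol σ τ xbar pbar lam w) :
    ∃ y₁ : Fin m → ℝ,
      (∀ y, sq2 ((σ xbar y)ᵀ *ᵥ pbar) ≤ sq2 ((σ xbar y₁)ᵀ *ᵥ pbar)) ∧
      lam = sq2 ((σ xbar y₁)ᵀ *ᵥ pbar) := by
  obtain ⟨hw, hper, heq⟩ := h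
  -- the cross term vanishes
  have hcross : ∀ y : Fin m → ℝ,
      ((τ y)ᵀ *ᵥ vgrad w y) ⬝ᵥ ((σ xbar y)ᵀ *ᵥ pbar) = 0 := by
    intro y
    rw [Matrix.dotProduct_mulVec, Matrix.mulVec_transpose, Matrix.vecMul_vecMul,
      huncor xbar y]
    simp
  have hdecomp : ∀ y : Fin m → ℝ,
      lam = sq2 ((τ y)ᵀ *ᵥ vgrad w y) + sq2 ((σ xbar y)ᵀ *ᵥ pbar) := by
    intro y
    rw [heq y, sq2_add, hcross y]
    ring
  -- w attains a maximum on the unit cube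
  have hwc : Continuous w := hw.continuous
  have hcomp : IsCompact (Set.Icc (0 : Fin m → ℝ) 1) := isCompact_Icc
  obtain ⟨y₁, hy₁mem, hy₁max⟩ := hcomp.exists_isMaxOn
    ⟨0, Set.left_mem_Icc.2 zero_le_one⟩ hwc.continuousOn
  -- y₁ is a global max by periodicity
  have hglobal : ∀ y : Fin m → ℝ, w y ≤ w y₁ := by
    intro y
    set k : Fin m → ℤ := fun i => ⌊y i⌋ with hk
    set y' : Fin m → ℝ := fun i => y i - (k i : ℝ) with hy'
    have hmem : y' ∈ Set.Icc (0 : Fin m → ℝ) 1 := by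
      constructor <;> intro i
      · simp [hy', hk, Int.sub_floor_div_mul_nonneg, sub_nonneg, Int.floor_le]
      · simp only [hy', Pi.one_apply]
        have := Int.lt_floor_add_one (y i)
        linarith
    have : w y = w y' := by
      have := hper y' k
      have hyy : (y' + fun i => (k i : ℝ)) = y := by
        funext i; simp [hy']
      rw [hyy] at this
      exact this
    rw [this]
    exact hy₁max hmem
  -- gradient vanishes at y₁
  have hmax : IsLocalMax w y₁ := by
    apply IsMaxOn.isLocalMax (s := Set.univ)
    · intro y _; exact hglobal y
    · exact Filter.univ_mem
  have hgrad : vgrad w y₁ = 0 := by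
    funext i
    simp [vgrad, pd, hmax.fderiv_eq_zero]
  refine ⟨y₁, ?_, ?_⟩
  · intro y
    have h1 := hdecomp y
    have h2 := hdecomp y₁
    rw [hgrad] at h2
    simp only [Matrix.mulVec_zero] at h2
    have : sq2 ((0:Fin r → ℝ)) = 0 := by simp [sq2]
    rw [this, zero_add] at h2
    have := sq2_nonneg ((τ y)ᵀ *ᵥ vgrad w y)
    linarith
  · have h2 := hdecomp y₁
    rw [hgrad] at h2
    simp only [Matrix.mulVec_zero] at h2
    have : sq2 ((0:Fin r → ℝ)) = 0 := by simp [sq2]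
    rw [this, zero_add] at h2
    exact h2

end
end

section
/- Fix x̄ ∈ ℝ and p̄ ≥ 0, and set c = (∫₀¹ σ(x̄,y)/τ(y) dy) / (∫₀¹ 1/τ(y) dy) and H̄ = c² p̄². Then the function w(y) = ∫₀^y (c p̄ − σ(x̄,s) p̄)/τ(s) ds is of class C¹, is 1-periodic, and satisfies (τ(y) w′(y) + σ(x̄,y) p̄)² = H̄ for every y ∈ ℝ. Consequently, in the one-dimensional subcritical case the effective Hamiltonian is H̄(x̄, p̄) = (∫₀¹ σ(x̄,y)/τ(y) dy)² (∫₀¹ 1/τ(y) dy)^{−2} p̄². -/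
open MeasureTheory intervalIntegral

/-! Along the corrector `w` the quantity `τ w' + σ p̄` is the constant `c p̄`, so `w` solves the
cell problem with value `c² p̄²`. The constant `c` is the `1/τ`-weighted mean of `σ(x̄, ·)`, which
is exactly the choice making the periodic integrand `w'` have zero mean over a period; hence the
primitive `w` is itself periodic. -/

theorem Function.Periodic.intervalIntegral_periodic {E : Type*} [NormedAddCommGroup E]
    [NormedSpace ℝ E] {f : ℝ → E} {T : ℝ} (hf : Function.Periodic f T)
    (h_int : ∀ t₁ t₂, IntervalIntegrable f volume t₁ t₂) (h_mean : ∫ x in (0:ℝ)..T, f x = 0)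
    (a : ℝ) : Function.Periodic (fun y => ∫ x in a..y, f x) T := by
  intro y
  simp only [hf.intervalIntegral_add_eq_add a y h_int, hf.intervalIntegral_add_eq a 0, zero_add,
    h_mean, add_zero]

theorem Continuous.contDiff_one_integral {E : Type*} [NormedAddCommGroup E] [NormedSpace ℝ E]
    [CompleteSpace E] {f : ℝ → E} (hf : Continuous f) (a : ℝ) :
    ContDiff ℝ 1 fun u => ∫ x in a..u, f x := by
  rw [contDiff_one_iff_deriv, funext (hf.deriv_integral f a)]
  exact ⟨fun u => (hf.integral_hasStrictDerivAt a u).hasDerivAt.differentiableAt, hf⟩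

theorem integral_sub_mul_div_eq_zero {g τ : ℝ → ℝ} {a b c : ℝ}
    (hg : IntervalIntegrable (fun y => g y / τ y) volume a b)
    (hτ : IntervalIntegrable (fun y => 1 / τ y) volume a b)
    (hc : c * ∫ y in a..b, 1 / τ y = ∫ y in a..b, g y / τ y) (p : ℝ) :
    ∫ s in a..b, (c * p - g s * p) / τ s = 0 := by
  have hsplit : (fun s => (c * p - g s * p) / τ s) =
      fun s => c * p * (1 / τ s) - p * (g s / τ s) := by
    funext s; ring
  rw [hsplit, integral_sub (hτ.const_mul _) (hg.const_mul _),
    intervalIntegral.integral_const_mul, intervalIntegral.integral_const_mul, mul_right_comm, hc]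
  ring

theorem stmt12_general (σ : ℝ → ℝ → ℝ) (τ : ℝ → ℝ)
    (hσc : Continuous fun q : ℝ × ℝ => σ q.1 q.2)
    (hσper : ∀ x y, σ x (y + 1) = σ x y)
    (hτc : Continuous τ)
    (hτper : ∀ y, τ (y + 1) = τ y)
    (θ : ℝ) (hθ : 0 < θ) (hτθ : ∀ y, θ ≤ τ y)
    (xbar pbar : ℝ)
    (c : ℝ)
    (hc : c = (∫ y in (0:ℝ)..1, σ xbar y / τ y) / (∫ y in (0:ℝ)..1, 1 / τ y))
    (w : ℝ → ℝ)
    (hw : ∀ y, w y = ∫ s in (0:ℝ)..y, (c * pbar - σ xbar s * pbar) / τ s) :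
    ContDiff ℝ 1 w ∧
    (∀ y, w (y + 1) = w y) ∧
    (∀ y, (τ y * deriv w y + σ xbar y * pbar) ^ 2 = c ^ 2 * pbar ^ 2) ∧
    c ^ 2 * pbar ^ 2 =
      (∫ y in (0:ℝ)..1, σ xbar y / τ y) ^ 2 *
        ((∫ y in (0:ℝ)..1, 1 / τ y)⁻¹) ^ 2 * pbar ^ 2 := by
  have hτpos : ∀ y, 0 < τ y := fun y => hθ.trans_le (hτθ y)
  have hτne : ∀ y, τ y ≠ 0 := fun y => (hτpos y).ne'
  have hσx : Continuous (σ xbar) := hσc.comp (continuous_const.prodMk continuous_id)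
  set f : ℝ → ℝ := fun s => (c * pbar - σ xbar s * pbar) / τ s
  have hfc : Continuous f := (continuous_const.sub (hσx.mul continuous_const)).div hτc hτne
  obtain rfl : w = fun y => ∫ s in (0:ℝ)..y, f s := funext hw
  have hmean_weight : 0 < ∫ y in (0:ℝ)..1, 1 / τ y :=
    intervalIntegral_pos_of_pos_on ((continuous_const.div hτc hτne).intervalIntegrable 0 1)
      (fun y _ => one_div_pos.mpr (hτpos y)) zero_lt_one
  have hf_mean : ∫ s in (0:ℝ)..1, f s = 0 :=
    integral_sub_mul_div_eq_zero ((hσx.div hτc hτne).intervalIntegrable 0 1)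
      ((continuous_const.div hτc hτne).intervalIntegrable 0 1)
      (by rw [hc, div_mul_cancel₀ _ hmean_weight.ne']) pbar
  have hf_per : Function.Periodic f 1 := fun s => by simp only [f, hσper, hτper]
  refine ⟨hfc.contDiff_one_integral 0,
    hf_per.intervalIntegral_periodic (fun _ _ => hfc.intervalIntegrable _ _) hf_mean 0,
    fun y => ?_, by rw [hc]; ring⟩
  rw [hfc.deriv_integral f 0 y, mul_div_cancel₀ _ (hτne y), sub_add_cancel, mul_pow]

/-- explicit formula for the effective Hamiltonian in the one-dimensional
subcritical case: the explicit corrector `w` is `C¹`, 1-periodic and solves the cell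
problem with value `H̄(x̄,p̄) = (∫₀¹ σ/τ)² (∫₀¹ 1/τ)⁻² p̄²`. -/
theorem stmt12 (σ : ℝ → ℝ → ℝ) (τ : ℝ → ℝ)
    (hσc : Continuous fun q : ℝ × ℝ => σ q.1 q.2)
    (hσper : ∀ x y, σ x (y + 1) = σ x y)
    (hσpos : ∀ x y, 0 ≤ σ x y)
    (hτc : Continuous τ)
    (hτper : ∀ y, τ (y + 1) = τ y)
    (θ : ℝ) (hθ : 0 < θ) (hτθ : ∀ y, θ ≤ τ y)
    (xbar pbar : ℝ) (hp : 0 ≤ pbar)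
    (c : ℝ)
    (hc : c = (∫ y in (0:ℝ)..1, σ xbar y / τ y) / (∫ y in (0:ℝ)..1, 1 / τ y))
    (w : ℝ → ℝ)
    (hw : ∀ y, w y = ∫ s in (0:ℝ)..y, (c * pbar - σ xbar s * pbar) / τ s) :
    ContDiff ℝ 1 w ∧
    (∀ y, w (y + 1) = w y) ∧
    (∀ y, (τ y * deriv w y + σ xbar y * pbar) ^ 2 = c ^ 2 * pbar ^ 2) ∧
    c ^ 2 * pbar ^ 2 =
      (∫ y in (0:ℝ)..1, σ xbar y / τ y) ^ 2 *
        ((∫ y in (0:ℝ)..1, 1 / τ y)⁻¹) ^ 2 * pbar ^ 2 :=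
  stmt12_general σ τ hσc hσper hτc hτper θ hθ hτθ xbar pbar c hc w hw
end
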